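/- arXiv:1610.04983 — 5 statements merged into one kernel-verified Lean document; each statement's English description precedes it below -/
import Mathlib

section
/- For every y ∈ R^n and A ∈ R^{m×n} with inf_{x ∈ V_r} ‖Ax‖₂ ≥ τ^{-1}, one has ‖Ay‖₂² ≥ τ^{−2}‖y‖₂² − (1/(r−1))(‖y‖₁ Σ_{j=1}^n ‖A e_j‖₂² |y_j| − τ^{−2}‖y‖₁²). -/
open Finset Real

noncomputable def l2norm {n : ℕ} (v : Fin n → ℝ) : ℝ := Real.sqrt (∑ i, v i ^ 2)

noncomputable def l1norm {n : ℕ} (v : Fin n → ℝ) : ℝ := ∑ i, |v i|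

noncomputable def l0norm {n : ℕ} (v : Fin n → ℝ) : ℕ :=
  (Finset.univ.filter (fun i => v i ≠ 0)).card

/-- the set of r-sparse unit ℓ2-norm vectors -/
def sparseSphere (n r : ℕ) : Set (Fin n → ℝ) :=
  {v | l0norm v ≤ r ∧ l2norm v = 1}

section aux

lemma l2norm_sq {n : ℕ} (v : Fin n → ℝ) : l2norm v ^ 2 = ∑ i, v i ^ 2 :=
  Real.sq_sqrt (Finset.sum_nonneg fun i _ => sq_nonneg _)

lemma l2norm_smul {n : ℕ} (a : ℝ) (v : Fin n → ℝ) : l2norm (a • v) = |a| * l2norm v := by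
  unfold l2norm
  rw [← Real.sqrt_sq_eq_abs, ← Real.sqrt_mul (sq_nonneg a), Finset.mul_sum]
  congr 1
  refine Finset.sum_congr rfl fun i _ => ?_
  simp [mul_pow]

lemma sign_mul_abs' (x : ℝ) : Real.sign x * |x| = x := by
  rcases lt_trichotomy x 0 with h | h | h
  · rw [Real.sign_of_neg h, abs_of_neg h]; ring
  · simp [h]
  · rw [Real.sign_of_pos h, abs_of_pos h]; ring

lemma sign_sq_mul_abs (x : ℝ) : Real.sign x * Real.sign x * |x| = |x| := by
  rcases lt_trichotomy x 0 with h | h | h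
  · rw [Real.sign_of_neg h]; ring
  · simp [h]
  · rw [Real.sign_of_pos h]; ring

variable {m n : ℕ} (A : Matrix (Fin m) (Fin n) ℝ) (τ : ℝ)

noncomputable def bform (u v : Fin n → ℝ) : ℝ :=
  (∑ i, A.mulVec u i * A.mulVec v i) - τ⁻¹ ^ 2 * ∑ i, u i * v i

lemma bform_self (x : Fin n → ℝ) :
    bform A τ x x = l2norm (A.mulVec x) ^ 2 - τ⁻¹ ^ 2 * l2norm x ^ 2 := by
  rw [bform, l2norm_sq, l2norm_sq]
  simp [sq]

lemma mulVec_sum {ι : Type*} (s : Finset ι) (f : ι → (Fin n → ℝ)) :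
    A.mulVec (∑ k ∈ s, f k) = ∑ k ∈ s, A.mulVec (f k) := by
  have h := map_sum A.mulVecLin f s
  simp only [Matrix.mulVecLin_apply] at h
  exact h

lemma sum_mul_sum_sum {N : ℕ} {ι κ : Type*} (s : Finset ι) (t : Finset κ)
    (a : ι → Fin N → ℝ) (b : κ → Fin N → ℝ) :
    ∑ i, (∑ k ∈ s, a k i) * (∑ l ∈ t, b l i) = ∑ k ∈ s, ∑ l ∈ t, ∑ i, a k i * b l i := by
  simp_rw [Finset.sum_mul_sum]
  rw [Finset.sum_comm]
  exact Finset.sum_congr rfl fun k _ => Finset.sum_comm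

lemma bform_sum_sum {ι κ : Type*} (s : Finset ι) (t : Finset κ)
    (f : ι → (Fin n → ℝ)) (g : κ → (Fin n → ℝ)) :
    bform A τ (∑ k ∈ s, f k) (∑ l ∈ t, g l) = ∑ k ∈ s, ∑ l ∈ t, bform A τ (f k) (g l) := by
  simp only [bform, mulVec_sum, Finset.sum_apply, Finset.sum_sub_distrib]
  rw [sum_mul_sum_sum, sum_mul_sum_sum, Finset.mul_sum]
  congr 1
  refine Finset.sum_congr rfl fun k _ => ?_
  rw [Finset.mul_sum]

lemma bform_smul (a b : ℝ) (u v : Fin n → ℝ) :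
    bform A τ (a • u) (b • v) = a * b * bform A τ u v := by
  simp only [bform, Matrix.mulVec_smul, Pi.smul_apply, smul_eq_mul]
  rw [mul_sub]
  congr 1
  · rw [Finset.mul_sum]; congr 1; funext i; ring
  · rw [Finset.mul_sum, Finset.mul_sum, Finset.mul_sum]; congr 1; funext i; ring


lemma bform_sparse_nonneg (hτ : 0 < τ) (r : ℕ)
    (hinf : ∀ x ∈ sparseSphere n r, τ⁻¹ ≤ l2norm (A.mulVec x))
    (x : Fin n → ℝ) (hx : l0norm x ≤ r) : 0 ≤ bform A τ x x := by
  by_cases hx0 : x = 0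
  · subst hx0
    simp [bform, Matrix.mulVec_zero]
  · have hsum : 0 < ∑ i, x i ^ 2 := by
      obtain ⟨i, hi⟩ : ∃ i, x i ≠ 0 := Function.ne_iff.mp hx0
      exact Finset.sum_pos' (fun j _ => sq_nonneg _) ⟨i, Finset.mem_univ i, by positivity⟩
    have hc : 0 < l2norm x := Real.sqrt_pos.mpr hsum
    have hone : l2norm ((l2norm x)⁻¹ • x) = 1 := by
      rw [l2norm_smul, abs_of_pos (inv_pos.mpr hc), inv_mul_cancel₀ hc.ne']
    have hx' : ((l2norm x)⁻¹ • x) ∈ sparseSphere n r := by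
      refine ⟨?_, hone⟩
      have hfilt : (Finset.univ.filter fun i => ((l2norm x)⁻¹ • x) i ≠ 0)
          = Finset.univ.filter fun i => x i ≠ 0 := by
        refine Finset.filter_congr fun i _ => ?_
        simp [hc.ne']
      unfold l0norm
      rw [hfilt]
      exact hx
    have h1 : τ⁻¹ ≤ l2norm (A.mulVec ((l2norm x)⁻¹ • x)) := hinf _ hx'
    have h2 : 0 ≤ bform A τ ((l2norm x)⁻¹ • x) ((l2norm x)⁻¹ • x) := by
      rw [bform_self, hone]
      have h3 : τ⁻¹ ^ 2 ≤ l2norm (A.mulVec ((l2norm x)⁻¹ • x)) ^ 2 :=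
        pow_le_pow_left₀ (inv_pos.mpr hτ).le h1 2
      linarith
    have hx_eq : bform A τ x x
        = l2norm x * l2norm x * bform A τ ((l2norm x)⁻¹ • x) ((l2norm x)⁻¹ • x) := by
      conv_lhs => rw [← smul_inv_smul₀ hc.ne' x]
      rw [bform_smul]
    rw [hx_eq]
    positivity

section comb

variable {n : ℕ} (y : Fin n → ℝ) (r : ℕ)

lemma marg_two (k l : Fin r) (hkl : k ≠ l) (i j : Fin n) :
    ∑ J : Fin r → Fin n, ((∏ p, |y (J p)|) *
      ((if J k = i then (1:ℝ) else 0) * (if J l = j then 1 else 0)))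
      = |y i| * |y j| * l1norm y ^ (r - 2) := by
  classical
  set f : Fin r → Fin n → ℝ := fun p x => |y x| *
    ((if p = k then (if x = i then 1 else 0) else 1) *
     (if p = l then (if x = j then 1 else 0) else 1)) with hf
  have hprod : ∀ J : Fin r → Fin n, (∏ p, f p (J p)) =
      (∏ p, |y (J p)|) * ((if J k = i then (1:ℝ) else 0) * (if J l = j then 1 else 0)) := by
    intro J
    rw [hf]
    simp only [Finset.prod_mul_distrib]
    rw [Finset.prod_ite_eq' Finset.univ k (fun p => if J p = i then (1:ℝ) else 0),
        Finset.prod_ite_eq' Finset.univ l (fun p => if J p = j then (1:ℝ) else 0)]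
    simp
  have hmain := Finset.prod_univ_sum (fun _ : Fin r => (Finset.univ : Finset (Fin n))) f
  rw [Fintype.piFinset_univ] at hmain
  have hsums : ∀ p : Fin r, (∑ x, f p x)
      = if p = k then |y i| else if p = l then |y j| else l1norm y := by
    intro p
    by_cases hpk : p = k
    · subst hpk
      rw [if_pos rfl]
      have : ∀ x, f p x = if x = i then |y x| else 0 := by
        intro x
        rw [hf]
        simp only [if_pos rfl, if_neg hkl]
        by_cases hxi : x = i <;> simp [hxi]
      simp only [this]
      simp
    · rw [if_neg hpk]
      by_cases hpl : p = l
      · subst hpl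
        rw [if_pos rfl]
        have : ∀ x, f p x = if x = j then |y x| else 0 := by
          intro x
          rw [hf]
          simp only [if_pos rfl, if_neg hpk]
          by_cases hxj : x = j <;> simp [hxj]
        simp only [this]
        simp
      · rw [if_neg hpl]
        have : ∀ x, f p x = |y x| := by
          intro x
          simp [hf, hpk, hpl]
        simp only [this]
        rfl
  calc ∑ J : Fin r → Fin n, ((∏ p, |y (J p)|) *
          ((if J k = i then (1:ℝ) else 0) * (if J l = j then 1 else 0)))
      = ∑ J : Fin r → Fin n, ∏ p, f p (J p) := by
        exact Finset.sum_congr rfl fun J _ => (hprod J).symm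
    _ = ∏ p, ∑ x, f p x := hmain.symm
    _ = ∏ p : Fin r, (if p = k then |y i| else if p = l then |y j| else l1norm y) := by
        exact Finset.prod_congr rfl fun p _ => hsums p
    _ = |y i| * |y j| * l1norm y ^ (r - 2) := by
        rw [← Finset.mul_prod_erase Finset.univ _ (Finset.mem_univ k)]
        rw [← Finset.mul_prod_erase (Finset.univ.erase k) _
            (Finset.mem_erase.mpr ⟨Ne.symm hkl, Finset.mem_univ l⟩)]
        rw [if_pos rfl, if_neg (Ne.symm hkl), if_pos rfl]
        have hrest : ∀ p ∈ (Finset.univ.erase k).erase l,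
            (if p = k then |y i| else if p = l then |y j| else l1norm y) = l1norm y := by
          intro p hp
          have h1 := (Finset.mem_erase.mp hp).1
          have h2 := (Finset.mem_erase.mp (Finset.mem_erase.mp hp).2).1
          rw [if_neg h2, if_neg h1]
        rw [Finset.prod_congr rfl hrest, Finset.prod_const]
        have hcard : ((Finset.univ.erase k).erase l).card = r - 2 := by
          rw [Finset.card_erase_of_mem (Finset.mem_erase.mpr ⟨Ne.symm hkl, Finset.mem_univ l⟩),
            Finset.card_erase_of_mem (Finset.mem_univ k)]
          rw [Finset.card_univ, Fintype.card_fin]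
          omega
        rw [hcard, mul_assoc]

lemma marg_one (k : Fin r) (i : Fin n) :
    ∑ J : Fin r → Fin n, ((∏ p, |y (J p)|) * (if J k = i then (1:ℝ) else 0))
      = |y i| * l1norm y ^ (r - 1) := by
  classical
  set f : Fin r → Fin n → ℝ := fun p x => |y x| *
    (if p = k then (if x = i then 1 else 0) else 1) with hf
  have hprod : ∀ J : Fin r → Fin n, (∏ p, f p (J p)) =
      (∏ p, |y (J p)|) * (if J k = i then (1:ℝ) else 0) := by
    intro J
    rw [hf]
    simp only [Finset.prod_mul_distrib]
    rw [Finset.prod_ite_eq' Finset.univ k (fun p => if J p = i then (1:ℝ) else 0)]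
    simp
  have hmain := Finset.prod_univ_sum (fun _ : Fin r => (Finset.univ : Finset (Fin n))) f
  rw [Fintype.piFinset_univ] at hmain
  have hsums : ∀ p : Fin r, (∑ x, f p x) = if p = k then |y i| else l1norm y := by
    intro p
    by_cases hpk : p = k
    · subst hpk
      rw [if_pos rfl]
      have : ∀ x, f p x = if x = i then |y x| else 0 := by
        intro x
        rw [hf]
        simp only [if_pos rfl]
        by_cases hxi : x = i <;> simp [hxi]
      simp only [this]
      simp
    · rw [if_neg hpk]
      have : ∀ x, f p x = |y x| := by intro x; simp [hf, hpk]
      simp only [this]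
      rfl
  calc ∑ J : Fin r → Fin n, ((∏ p, |y (J p)|) * (if J k = i then (1:ℝ) else 0))
      = ∑ J : Fin r → Fin n, ∏ p, f p (J p) :=
        Finset.sum_congr rfl fun J _ => (hprod J).symm
    _ = ∏ p, ∑ x, f p x := hmain.symm
    _ = ∏ p : Fin r, (if p = k then |y i| else l1norm y) :=
        Finset.prod_congr rfl fun p _ => hsums p
    _ = |y i| * l1norm y ^ (r - 1) := by
        rw [← Finset.mul_prod_erase Finset.univ _ (Finset.mem_univ k), if_pos rfl]
        have hrest : ∀ p ∈ Finset.univ.erase k,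
            (if p = k then |y i| else l1norm y) = l1norm y := fun p hp =>
          if_neg (Finset.mem_erase.mp hp).1
        rw [Finset.prod_congr rfl hrest, Finset.prod_const,
          Finset.card_erase_of_mem (Finset.mem_univ k)]
        simp [Finset.card_univ]

lemma T_offdiag (g : Fin n → Fin n → ℝ) (k l : Fin r) (hkl : k ≠ l) :
    ∑ J : Fin r → Fin n, (∏ p, |y (J p)|) * g (J k) (J l)
      = (∑ i, ∑ j, |y i| * |y j| * g i j) * l1norm y ^ (r - 2) := by
  classical
  have h1 : ∀ J : Fin r → Fin n, (∏ p, |y (J p)|) * g (J k) (J l)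
      = ∑ i, ∑ j, ((∏ p, |y (J p)|) *
        ((if J k = i then (1:ℝ) else 0) * (if J l = j then 1 else 0))) * g i j := by
    intro J
    rw [Finset.sum_comm]
    rw [Finset.sum_eq_single (J l)]
    · rw [Finset.sum_eq_single (J k)]
      · simp
      · intro b _ hb; simp [Ne.symm hb]
      · intro h; exact absurd (Finset.mem_univ _) h
    · intro b _ hb
      apply Finset.sum_eq_zero
      intro i _
      simp [Ne.symm hb]
    · intro h; exact absurd (Finset.mem_univ _) h
  simp_rw [h1]
  rw [Finset.sum_comm]
  rw [Finset.sum_mul]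
  refine Finset.sum_congr rfl fun i _ => ?_
  rw [Finset.sum_comm, Finset.sum_mul]
  refine Finset.sum_congr rfl fun j _ => ?_
  rw [← Finset.sum_mul, marg_two y r k l hkl i j]
  ring

lemma T_diag (g : Fin n → ℝ) (k : Fin r) :
    ∑ J : Fin r → Fin n, (∏ p, |y (J p)|) * g (J k)
      = (∑ i, |y i| * g i) * l1norm y ^ (r - 1) := by
  classical
  have h1 : ∀ J : Fin r → Fin n, (∏ p, |y (J p)|) * g (J k)
      = ∑ i, ((∏ p, |y (J p)|) * (if J k = i then (1:ℝ) else 0)) * g i := by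
    intro J
    rw [Finset.sum_eq_single (J k)]
    · simp
    · intro b _ hb; simp [Ne.symm hb]
    · intro h; exact absurd (Finset.mem_univ _) h
  simp_rw [h1]
  rw [Finset.sum_comm, Finset.sum_mul]
  refine Finset.sum_congr rfl fun i _ => ?_
  rw [← Finset.sum_mul, marg_one y r k i]
  ring

end comb

end aux

theorem stmt3 {m n : ℕ} (A : Matrix (Fin m) (Fin n) ℝ) (r : ℕ) (hr : 2 ≤ r)
    (τ : ℝ) (hτ : 0 < τ)
    (hinf : ∀ x ∈ sparseSphere n r, τ⁻¹ ≤ l2norm (A.mulVec x))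
    (y : Fin n → ℝ) :
    τ⁻¹ ^ 2 * l2norm y ^ 2 -
      (1 / ((r : ℝ) - 1)) *
        (l1norm y * (∑ j, l2norm (A.mulVec (Pi.single j 1)) ^ 2 * |y j|) -
          τ⁻¹ ^ 2 * l1norm y ^ 2)
      ≤ l2norm (A.mulVec y) ^ 2 := by
  classical
  set s : Fin n → ℝ := fun j => Real.sign (y j) with hs
  set e : Fin n → (Fin n → ℝ) := fun i => Pi.single i 1 with he
  set B : Fin n → Fin n → ℝ := fun i j => bform A τ (e i) (e j) with hB
  set L : ℝ := l1norm y with hL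
  set u : (Fin r → Fin n) → (Fin n → ℝ) := fun J => ∑ k, (s (J k)) • e (J k) with hu
  -- expand y over basis
  have hy_expand : y = ∑ i, y i • e i := by
    rw [he]
    funext i
    simp [Finset.sum_apply, Pi.single_apply]
  have hByy : bform A τ y y = ∑ i, ∑ j, y i * y j * B i j := by
    conv_lhs => rw [hy_expand]
    rw [bform_sum_sum]
    refine Finset.sum_congr rfl fun i _ => Finset.sum_congr rfl fun j _ => ?_
    rw [bform_smul, hB]
  -- expansion of bform (u J) (u J)
  have huJ : ∀ J : Fin r → Fin n,
      bform A τ (u J) (u J) = ∑ k, ∑ l, (s (J k) * s (J l)) * B (J k) (J l) := by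
    intro J
    rw [hu]
    rw [bform_sum_sum]
    refine Finset.sum_congr rfl fun k _ => Finset.sum_congr rfl fun l _ => ?_
    rw [bform_smul, hB]
  -- sparsity of u J
  have hsparse : ∀ J : Fin r → Fin n, l0norm (u J) ≤ r := by
    intro J
    have hsub : (Finset.univ.filter fun i => u J i ≠ 0) ⊆ Finset.univ.image J := by
      intro i hi
      rw [Finset.mem_filter] at hi
      by_contra hni
      apply hi.2
      show (∑ k, (s (J k)) • e (J k)) i = 0
      rw [Finset.sum_apply]
      refine Finset.sum_eq_zero fun k _ => ?_
      have hne : J k ≠ i := by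
        intro h
        exact hni (Finset.mem_image.mpr ⟨k, Finset.mem_univ k, h⟩)
      show s (J k) * (Pi.single (J k) 1 : Fin n → ℝ) i = 0
      rw [Pi.single_eq_of_ne (Ne.symm hne) 1, mul_zero]
    calc l0norm (u J) ≤ (Finset.univ.image J).card := Finset.card_le_card hsub
      _ ≤ (Finset.univ : Finset (Fin r)).card := Finset.card_image_le
      _ = r := by rw [Finset.card_univ, Fintype.card_fin]
  -- nonnegativity of the big sum
  have hS : 0 ≤ ∑ J : Fin r → Fin n, (∏ p, |y (J p)|) * bform A τ (u J) (u J) := by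
    refine Finset.sum_nonneg fun J _ => mul_nonneg
      (Finset.prod_nonneg fun p _ => abs_nonneg _)
      (bform_sparse_nonneg A τ hτ r hinf (u J) (hsparse J))
  -- compute the big sum
  have hD1 : ∑ i, ∑ j, |y i| * |y j| * (s i * s j * B i j) = bform A τ y y := by
    rw [hByy]
    refine Finset.sum_congr rfl fun i _ => Finset.sum_congr rfl fun j _ => ?_
    have h1 : s i * |y i| = y i := sign_mul_abs' (y i)
    have h2 : s j * |y j| = y j := sign_mul_abs' (y j)
    calc |y i| * |y j| * (s i * s j * B i j)
        = (s i * |y i|) * (s j * |y j|) * B i j := by ring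
      _ = y i * y j * B i j := by rw [h1, h2]
  have hD2 : ∑ i, |y i| * (s i * s i * B i i) = ∑ i, |y i| * B i i := by
    refine Finset.sum_congr rfl fun i _ => ?_
    calc |y i| * (s i * s i * B i i) = (s i * s i * |y i|) * B i i := by ring
      _ = |y i| * B i i := by rw [sign_sq_mul_abs]
  have hSeq : ∑ J : Fin r → Fin n, (∏ p, |y (J p)|) * bform A τ (u J) (u J)
      = (r : ℝ) * ((r : ℝ) - 1) * bform A τ y y * L ^ (r - 2)
        + (r : ℝ) * ((∑ i, |y i| * B i i) * L ^ (r - 1)) := by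
    have step1 : ∑ J : Fin r → Fin n, (∏ p, |y (J p)|) * bform A τ (u J) (u J)
        = ∑ k : Fin r, ∑ l : Fin r, ∑ J : Fin r → Fin n,
            (∏ p, |y (J p)|) * ((s (J k) * s (J l)) * B (J k) (J l)) := by
      simp_rw [huJ, Finset.mul_sum]
      rw [Finset.sum_comm]
      refine Finset.sum_congr rfl fun k _ => Finset.sum_comm
    rw [step1]
    have step2 : ∀ k l : Fin r, (∑ J : Fin r → Fin n,
        (∏ p, |y (J p)|) * ((s (J k) * s (J l)) * B (J k) (J l)))
        = if k = l then (∑ i, |y i| * B i i) * L ^ (r - 1)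
          else bform A τ y y * L ^ (r - 2) := by
      intro k l
      by_cases hkl : k = l
      · subst hkl
        rw [if_pos rfl]
        have := T_diag y r (fun i => s i * s i * B i i) k
        rw [this.trans (by rw [hD2])]
      · rw [if_neg hkl]
        have := T_offdiag y r (fun i j => s i * s j * B i j) k l hkl
        rw [this.trans (by rw [hD1])]
    simp_rw [step2]
    have step3 : ∀ k : Fin r, (∑ l : Fin r, if k = l then (∑ i, |y i| * B i i) * L ^ (r - 1)
        else bform A τ y y * L ^ (r - 2))
        = ((r : ℝ) - 1) * (bform A τ y y * L ^ (r - 2))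
          + (∑ i, |y i| * B i i) * L ^ (r - 1) := by
      intro k
      have : ∀ l : Fin r, (if k = l then (∑ i, |y i| * B i i) * L ^ (r - 1)
          else bform A τ y y * L ^ (r - 2))
          = bform A τ y y * L ^ (r - 2) + (if k = l then
              (∑ i, |y i| * B i i) * L ^ (r - 1) - bform A τ y y * L ^ (r - 2) else 0) := by
        intro l
        by_cases h : k = l <;> simp [h]
      simp_rw [this]
      rw [Finset.sum_add_distrib, Finset.sum_const, Finset.sum_ite_eq, if_pos (Finset.mem_univ k),
        Finset.card_univ, Fintype.card_fin, nsmul_eq_mul]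
      have hr1 : (1:ℝ) ≤ (r:ℝ) := by exact_mod_cast le_trans (by norm_num) hr
      ring
    simp_rw [step3]
    rw [Finset.sum_const, Finset.card_univ, Fintype.card_fin, nsmul_eq_mul]
    ring
  rw [hSeq] at hS
  -- diagonal entries
  have hBii : ∀ i, B i i = l2norm (A.mulVec (Pi.single i 1)) ^ 2 - τ⁻¹ ^ 2 := by
    intro i
    show bform A τ (Pi.single i 1) (Pi.single i 1) = _
    rw [bform_self]
    have : l2norm (Pi.single i 1 : Fin n → ℝ) = 1 := by
      unfold l2norm
      rw [show (∑ j, (Pi.single i 1 : Fin n → ℝ) j ^ 2) = 1 by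
        simp [Pi.single_apply, sq]]
      exact Real.sqrt_one
    rw [this]
    ring
  have hDval : (∑ i, |y i| * B i i)
      = (∑ j, l2norm (A.mulVec (Pi.single j 1)) ^ 2 * |y j|) - τ⁻¹ ^ 2 * L := by
    simp_rw [hBii]
    rw [show (∑ i, |y i| * (l2norm (A.mulVec (Pi.single i 1)) ^ 2 - τ⁻¹ ^ 2))
        = (∑ i, (l2norm (A.mulVec (Pi.single i 1)) ^ 2 * |y i| - τ⁻¹ ^ 2 * |y i|)) from
      Finset.sum_congr rfl fun i _ => by ring]
    rw [Finset.sum_sub_distrib, ← Finset.mul_sum]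
    rfl
  have hL_nonneg : 0 ≤ L := Finset.sum_nonneg fun i _ => abs_nonneg _
  rcases eq_or_lt_of_le hL_nonneg with hL0 | hLpos
  · -- L = 0 ⇒ y = 0
    have hy0 : y = 0 := by
      funext i
      have h0 : ∑ j, |y j| = 0 := hL0.symm
      have := (Finset.sum_eq_zero_iff_of_nonneg (fun j _ => abs_nonneg (y j))).mp h0 i
        (Finset.mem_univ i)
      simpa [abs_eq_zero] using this
    subst hy0
    rw [← hL0]
    have h1 : l2norm (0 : Fin n → ℝ) = 0 := by simp [l2norm]
    have h2 : l2norm (A.mulVec (0 : Fin n → ℝ)) = 0 := by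
      rw [Matrix.mulVec_zero]; simp [l2norm]
    rw [h1, h2]
    norm_num
  · -- L > 0
    have hr1 : (1:ℝ) ≤ (r:ℝ) - 1 := by
      have : (2:ℝ) ≤ (r:ℝ) := by exact_mod_cast hr
      linarith
    have hrpos : (0:ℝ) < (r:ℝ) := by linarith
    have hc : (0:ℝ) < (r:ℝ) - 1 := by linarith
    have hpow : L ^ (r - 1) = L ^ (r - 2) * L := by
      rw [show r - 1 = (r - 2) + 1 by omega, pow_succ]
    rw [hpow] at hS
    have hP : (0:ℝ) < L ^ (r - 2) := pow_pos hLpos _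
    set β := bform A τ y y with hβ
    set D := ∑ i, |y i| * B i i with hD
    have hkey : 0 ≤ ((r:ℝ) - 1) * β + L * D := by
      by_contra hcon
      push_neg at hcon
      have hmul := mul_neg_of_pos_of_neg (mul_pos hrpos hP) hcon
      nlinarith [hS, hmul]
    rw [hDval] at hkey
    have hβval : β = l2norm (A.mulVec y) ^ 2 - τ⁻¹ ^ 2 * l2norm y ^ 2 := bform_self A τ y
    rw [hβval] at hkey
    -- now conclude by algebra
    set X := L * ((∑ j, l2norm (A.mulVec (Pi.single j 1)) ^ 2 * |y j|) - τ⁻¹ ^ 2 * L) with hX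
    set Z := l2norm (A.mulVec y) ^ 2 - τ⁻¹ ^ 2 * l2norm y ^ 2 with hZ
    have hkey2 : -X ≤ ((r:ℝ) - 1) * Z := by linarith [hkey]
    have hd : (0:ℝ) < 1 / ((r:ℝ) - 1) := by positivity
    have h3 := mul_le_mul_of_nonneg_left hkey2 hd.le
    rw [← mul_assoc, one_div_mul_cancel hc.ne', one_mul] at h3
    have hXeq : L * (∑ j, l2norm (A.mulVec (Pi.single j 1)) ^ 2 * |y j|) - τ⁻¹ ^ 2 * L ^ 2
        = X := by rw [hX]; ring
    rw [hXeq]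
    linarith [h3, hZ]
end

section
/- Let Z₁,…,Z_n be mean-zero L-subgaussian random variables (not necessarily independent) with max_i ‖Z_i‖_{L₂} ≤ M. Then E (Σ_{i=1}^k (Z_i*)²)^{1/2} ≤ c L M √(k log(en/k)) for an absolute constant c, where (Z_i*) denotes the non-increasing rearrangement of (|Z_i|). -/
open MeasureTheory Real Finset

/-! By Hölder, the ℓ₂ norm of any `k` coordinates of a vector is at most `k ^ (1/2 - 1/p)` times
its ℓ_p norm. Jensen's inequality for the concave map `t ↦ t ^ (1/p)` and the subgaussian moment
bound give `E ‖Z‖_p ≤ (∑ E |Z_i| ^ p) ^ (1/p) ≤ n ^ (1/p) L √p M`. The choice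
`p = 2 log (e n / k)` makes `(e n / k) ^ (1/p) = √e`, so the bound is `√(2e) L M √(k log (e n / k))`. -/

/-- Sum of squares of the k largest-magnitude entries of v, expressed as the
maximum of ∑_{i ∈ I} v i ² over subsets I of cardinality k. -/
noncomputable def topkSq {n : ℕ} (k : ℕ) (v : Fin n → ℝ) : ℝ :=
  sSup {c : ℝ | ∃ I : Finset (Fin n), I.card = k ∧ c = ∑ i ∈ I, v i ^ 2}

lemma sum_sq_rpow_le_card_rpow_mul_sum_rpow {ι : Type*} [Fintype ι] (v : ι → ℝ)
    (I : Finset ι) {p : ℝ} (hp : 2 ≤ p) :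
    (∑ i ∈ I, v i ^ 2) ^ (p / 2) ≤ (#I : ℝ) ^ (p / 2 - 1) * ∑ i, |v i| ^ p := by
  have hsq : ∀ i, (v i ^ 2) ^ (p / 2) = |v i| ^ p := fun i => by
    rw [← sq_abs, ← rpow_natCast, ← rpow_mul (abs_nonneg _)]
    norm_num [mul_div_cancel₀]
  calc (∑ i ∈ I, v i ^ 2) ^ (p / 2)
      ≤ (#I : ℝ) ^ (p / 2 - 1) * ∑ i ∈ I, (v i ^ 2) ^ (p / 2) :=
        rpow_sum_le_const_mul_sum_rpow_of_nonneg I (by linarith) fun i _ => sq_nonneg (v i)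
    _ ≤ (#I : ℝ) ^ (p / 2 - 1) * ∑ i, |v i| ^ p := by
        simp only [hsq]
        gcongr
        exact subset_univ I

lemma sqrt_topkSq_le {n : ℕ} (k : ℕ) (v : Fin n → ℝ) {p : ℝ} (hp : 2 ≤ p) :
    √(topkSq k v) ≤ (k : ℝ) ^ (1 / 2 - 1 / p) * (∑ i, |v i| ^ p) ^ (1 / p) := by
  have hp0 : 0 < p := by linarith
  set S := ∑ i, |v i| ^ p
  have hS : 0 ≤ S := by positivity
  have htop : topkSq k v ≤ ((k : ℝ) ^ (p / 2 - 1) * S) ^ (2 / p) := by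
    refine Real.sSup_le ?_ (by positivity)
    rintro _ ⟨I, rfl, rfl⟩
    rw [← rpow_inv_le_iff_of_pos (by positivity) (by positivity) (by positivity), inv_div]
    exact sum_sq_rpow_le_card_rpow_mul_sum_rpow v I hp
  calc √(topkSq k v) ≤ √(((k : ℝ) ^ (p / 2 - 1) * S) ^ (2 / p)) := sqrt_le_sqrt htop
    _ = (k : ℝ) ^ (1 / 2 - 1 / p) * S ^ (1 / p) := by
      rw [sqrt_eq_rpow, ← rpow_mul (by positivity), mul_rpow (by positivity) hS,
        ← rpow_mul (by positivity)]
      congr 2 <;> field_simp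

section Jensen

variable {Ω : Type*} [MeasurableSpace Ω] {μ : Measure Ω} {g : Ω → ℝ} {r : ℝ}

lemma MeasureTheory.Integrable.rpow_of_le_one [IsFiniteMeasure μ] (hg : Integrable g μ)
    (hg0 : 0 ≤ᵐ[μ] g) (hr0 : 0 ≤ r) (hr1 : r ≤ 1) : Integrable (fun ω => g ω ^ r) μ := by
  refine ((hg.const_mul r).add (integrable_const (1 - r))).mono'
    ((continuous_rpow_const hr0).comp_aestronglyMeasurable hg.aestronglyMeasurable) ?_
  filter_upwards [hg0] with ω hω
  have h := geom_mean_le_arith_mean2_weighted hr0 (sub_nonneg.2 hr1) hω zero_le_one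
    (add_sub_cancel r 1)
  rw [norm_of_nonneg (rpow_nonneg hω r)]
  simpa using h

lemma integral_rpow_le_rpow_integral [IsProbabilityMeasure μ] (hg : Integrable g μ)
    (hg0 : 0 ≤ᵐ[μ] g) (hr0 : 0 ≤ r) (hr1 : r ≤ 1) :
    ∫ ω, g ω ^ r ∂μ ≤ (∫ ω, g ω ∂μ) ^ r :=
  (concaveOn_rpow hr0 hr1).le_map_integral (continuous_rpow_const hr0).continuousOn
    isClosed_Ici hg0 hg (hg.rpow_of_le_one hg0 hr0 hr1)

end Jensen

lemma integral_rpow_sum_abs_rpow_le {Ω ι : Type*} [MeasurableSpace Ω] {μ : Measure Ω}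
    [IsProbabilityMeasure μ] [Fintype ι] {Z : ι → Ω → ℝ} {p B : ℝ} (hp : 1 ≤ p) (hB : 0 ≤ B)
    (hint : ∀ i, Integrable (fun ω => |Z i ω| ^ p) μ)
    (hmom : ∀ i, (∫ ω, |Z i ω| ^ p ∂μ) ^ (1 / p) ≤ B) :
    ∫ ω, (∑ i, |Z i ω| ^ p) ^ (1 / p) ∂μ ≤ (Fintype.card ι : ℝ) ^ (1 / p) * B := by
  have hp0 : 0 < p := by linarith
  have hmom' : ∀ i, ∫ ω, |Z i ω| ^ p ∂μ ≤ B ^ p := fun i =>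
    (rpow_inv_le_iff_of_pos (integral_nonneg fun ω => by positivity) hB hp0).1
      (by simpa only [one_div] using hmom i)
  calc ∫ ω, (∑ i, |Z i ω| ^ p) ^ (1 / p) ∂μ
      ≤ (∫ ω, ∑ i, |Z i ω| ^ p ∂μ) ^ (1 / p) :=
        integral_rpow_le_rpow_integral (integrable_finsetSum _ fun i _ => hint i)
          (ae_of_all _ fun ω => by positivity) (by positivity) ((div_le_one hp0).2 hp)
    _ = (∑ i, ∫ ω, |Z i ω| ^ p ∂μ) ^ (1 / p) := by
        rw [integral_finsetSum _ fun i _ => hint i]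
    _ ≤ (Fintype.card ι * B ^ p) ^ (1 / p) := by
        gcongr
        simpa using sum_le_sum fun i (_ : i ∈ univ) => hmom' i
    _ = (Fintype.card ι : ℝ) ^ (1 / p) * B := by
        rw [mul_rpow (by positivity) (by positivity), ← rpow_mul hB, mul_one_div_cancel hp0.ne',
          rpow_one]

lemma one_le_log_exp_one_mul_div {k n : ℝ} (hk : 0 < k) (hkn : k ≤ n) :
    1 ≤ log (exp 1 * n / k) := by
  rw [le_log_iff_exp_le (div_pos (mul_pos (exp_pos 1) (hk.trans_le hkn)) hk), le_div_iff₀ hk]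
  exact mul_le_mul_of_nonneg_left hkn (exp_pos 1).le

lemma rpow_mul_rpow_le_sqrt_exp_one_mul {k n p : ℝ} (hk : 0 < k) (hkn : k ≤ n)
    (hp : p = 2 * log (exp 1 * n / k)) :
    k ^ (1 / 2 - 1 / p) * n ^ (1 / p) ≤ √(exp 1 * k) := by
  set q := log (exp 1 * n / k)
  have hq : 1 ≤ q := one_le_log_exp_one_mul_div hk hkn
  have hp0 : 0 < p := by linarith
  have hn : n ≤ k * exp q := by
    rw [exp_log (div_pos (mul_pos (exp_pos 1) (hk.trans_le hkn)) hk), mul_div_cancel₀ _ hk.ne']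
    exact le_mul_of_one_le_left (hk.le.trans hkn) (one_le_exp zero_le_one)
  calc k ^ (1 / 2 - 1 / p) * n ^ (1 / p)
      ≤ k ^ (1 / 2 - 1 / p) * (k * exp q) ^ (1 / p) := by gcongr; linarith
    _ = k ^ (1 / 2 - 1 / p + 1 / p) * exp (q * (1 / p)) := by
        rw [mul_rpow hk.le (exp_pos q).le, ← exp_mul, rpow_add hk, mul_assoc]
    _ = √(exp 1 * k) := by
        rw [sub_add_cancel, hp, show q * (1 / (2 * q)) = 1 / 2 by field_simp, sqrt_eq_rpow,
          mul_rpow (exp_pos 1).le hk.le, ← exp_mul, one_mul, mul_comm]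

/-- Expectation bound for the ℓ₂ norm of the k largest of n mean-zero
L-subgaussian random variables (not necessarily independent). -/
theorem stmt6 :
    ∃ c > (0 : ℝ),
      ∀ (n k : ℕ), 1 ≤ k → k ≤ n →
      ∀ (L M : ℝ), 1 ≤ L → 0 < M →
      ∀ (Ω : Type) (_ : MeasurableSpace Ω) (μ : Measure Ω) (_ : IsProbabilityMeasure μ)
        (Z : Fin n → Ω → ℝ),
        (∀ i, Measurable (Z i)) →
        (∀ i, ∀ p : ℝ, 1 ≤ p → Integrable (fun ω => |Z i ω| ^ p) μ) →
        (∀ i, (∫ ω, Z i ω ∂μ) = 0) →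
        (∀ i, ∀ p : ℝ, 1 ≤ p →
          (∫ ω, |Z i ω| ^ p ∂μ) ^ (1/p) ≤
            L * Real.sqrt p * (∫ ω, Z i ω ^ 2 ∂μ) ^ ((1:ℝ)/2)) →
        (∀ i, (∫ ω, Z i ω ^ 2 ∂μ) ^ ((1:ℝ)/2) ≤ M) →
        Integrable (fun ω => Real.sqrt (topkSq k (fun i => Z i ω))) μ →
        (∫ ω, Real.sqrt (topkSq k (fun i => Z i ω)) ∂μ) ≤
          c * L * M * Real.sqrt (k * Real.log (Real.exp 1 * n / k)) := by
  refine ⟨√(2 * exp 1), by positivity, ?_⟩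
  intro n k hk hkn L M _ _ Ω _ μ _ Z _ hint _ hmom hM2 hint_top
  have hk0 : (0 : ℝ) < k := by exact_mod_cast hk
  have hkn' : (k : ℝ) ≤ n := by exact_mod_cast hkn
  set q := log (exp 1 * n / k)
  have hq : 1 ≤ q := one_le_log_exp_one_mul_div hk0 hkn'
  set p := 2 * q with hp
  have hp2 : 2 ≤ p := by linarith
  have hint_lp : Integrable (fun ω => (∑ i, |Z i ω| ^ p) ^ (1 / p)) μ :=
    (integrable_finsetSum _ fun i _ => hint i p (by linarith)).rpow_of_le_one
      (ae_of_all _ fun ω => by positivity) (by positivity)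
      ((div_le_one (by linarith)).2 (by linarith))
  have hLp : ∀ i, (∫ ω, |Z i ω| ^ p ∂μ) ^ (1 / p) ≤ L * √p * M := fun i =>
    (hmom i p (by linarith)).trans (by gcongr; exact hM2 i)
  have hsqrt : √(exp 1 * k) * √p = √(2 * exp 1) * √(k * q) := by
    rw [← sqrt_mul (by positivity), ← sqrt_mul (by positivity), hp]
    ring_nf
  calc ∫ ω, √(topkSq k fun i => Z i ω) ∂μ
      ≤ ∫ ω, (k : ℝ) ^ (1 / 2 - 1 / p) * (∑ i, |Z i ω| ^ p) ^ (1 / p) ∂μ :=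
        integral_mono hint_top (hint_lp.const_mul _) fun ω => sqrt_topkSq_le k _ hp2
    _ = (k : ℝ) ^ (1 / 2 - 1 / p) * ∫ ω, (∑ i, |Z i ω| ^ p) ^ (1 / p) ∂μ :=
        integral_const_mul _ _
    _ ≤ (k : ℝ) ^ (1 / 2 - 1 / p) * ((n : ℝ) ^ (1 / p) * (L * √p * M)) := by
        gcongr
        simpa using integral_rpow_sum_abs_rpow_le (by linarith) (by positivity)
          (fun i => hint i p (by linarith)) hLp
    _ ≤ √(exp 1 * k) * (L * √p * M) := by
        rw [← mul_assoc]
        gcongr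
        exact rpow_mul_rpow_le_sqrt_exp_one_mul hk0 hkn' hp
    _ = √(2 * exp 1) * L * M * √(k * q) := by linear_combination L * M * hsqrt
end

section
/- Let Z₁,…,Z_n be random variables with E exp(Z_i²/K²) ≤ c₁ for all i, where K > 0. Then E (1/k) Σ_{i=1}^k (Z_i*)² ≤ K² log(c₁ n/k), where Z_i* is the non-increasing rearrangement of |Z_i|. -/
/-!
Each of the `k` largest squares is `K² log exp(Z_i²/K²)`, so by concavity of `log` their average
is at most `K² log` of the average of the `k` largest exponentials, which is at most
`K² log G` with `G = (1/k) Σ_{i ≤ n} exp(Z_i²/K²)`. A second application of Jensen's inequality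
moves the expectation inside the logarithm, and `E G ≤ c₁ n / k`.
-/

open MeasureTheory Real Finset

theorem Real.sum_log_le_card_mul_log_average {ι : Type*} (s : Finset ι) {a : ι → ℝ}
    (ha : ∀ i ∈ s, 0 < a i) :
    ∑ i ∈ s, log (a i) ≤ #s * log ((∑ i ∈ s, a i) / #s) := by
  rcases s.eq_empty_or_nonempty with rfl | hs
  · simp
  have hcard : (0 : ℝ) < #s := by exact_mod_cast hs.card_pos
  have hjensen := strictConcaveOn_log_Ioi.concaveOn.le_map_sum (t := s) (w := fun _ => (#s : ℝ)⁻¹)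
    (p := a) (fun _ _ => by positivity) (by simp [hcard.ne']) ha
  simp only [smul_eq_mul, ← mul_sum] at hjensen
  rw [div_eq_inv_mul]
  calc ∑ i ∈ s, log (a i) = #s * ((#s : ℝ)⁻¹ * ∑ i ∈ s, log (a i)) := by field_simp
    _ ≤ #s * log ((#s : ℝ)⁻¹ * ∑ i ∈ s, a i) := by gcongr

theorem sum_sq_le_card_mul_log_sum_exp {ι : Type*} [Fintype ι] (I : Finset ι) (hI : I.Nonempty)
    {K : ℝ} (hK : 0 < K) (v : ι → ℝ) :
    ∑ i ∈ I, v i ^ 2 ≤ #I * K ^ 2 * log ((∑ i, exp (v i ^ 2 / K ^ 2)) / #I) := by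
  have hsub : ∑ i ∈ I, exp (v i ^ 2 / K ^ 2) ≤ ∑ i, exp (v i ^ 2 / K ^ 2) :=
    sum_le_sum_of_subset_of_nonneg (subset_univ I) (fun i _ _ => (exp_pos _).le)
  calc ∑ i ∈ I, v i ^ 2 = K ^ 2 * ∑ i ∈ I, log (exp (v i ^ 2 / K ^ 2)) := by
        simp only [log_exp, mul_sum]
        exact sum_congr rfl fun i _ => by field_simp
    _ ≤ K ^ 2 * (#I * log ((∑ i ∈ I, exp (v i ^ 2 / K ^ 2)) / #I)) := by
        gcongr
        exact sum_log_le_card_mul_log_average I fun i _ => exp_pos _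
    _ = #I * K ^ 2 * log ((∑ i ∈ I, exp (v i ^ 2 / K ^ 2)) / #I) := by ring
    _ ≤ #I * K ^ 2 * log ((∑ i, exp (v i ^ 2 / K ^ 2)) / #I) := by
        have : (0 : ℝ) < #I := by exact_mod_cast hI.card_pos
        gcongr

theorem topkSq_le_mul_log_sum_exp {n k : ℕ} (hk : 1 ≤ k) (hkn : k ≤ n) {K : ℝ} (hK : 0 < K)
    (v : Fin n → ℝ) :
    topkSq k v ≤ k * K ^ 2 * log ((∑ i, exp (v i ^ 2 / K ^ 2)) / k) := by
  obtain ⟨I₀, -, hI₀⟩ := exists_subset_card_eq (s := (univ : Finset (Fin n))) (n := k)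
    (by simpa using hkn)
  refine csSup_le ⟨_, I₀, hI₀, rfl⟩ ?_
  rintro c ⟨I, rfl, rfl⟩
  exact sum_sq_le_card_mul_log_sum_exp I (card_pos.mp hk) hK v

theorem MeasureTheory.integral_pos_of_forall_pos {Ω : Type*} [MeasurableSpace Ω] {μ : Measure Ω}
    [NeZero μ] {f : Ω → ℝ} (hf : Integrable f μ) (hpos : ∀ ω, 0 < f ω) :
    0 < ∫ ω, f ω ∂μ := by
  rw [integral_pos_iff_support_of_nonneg (fun ω => (hpos ω).le) hf,
    Function.support_eq_univ fun ω => (hpos ω).ne']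
  exact Measure.measure_univ_pos.mpr (NeZero.ne μ)

theorem MeasureTheory.integral_le_mul_log_integral {Ω : Type*} [MeasurableSpace Ω]
    {μ : Measure Ω} [IsProbabilityMeasure μ] {f h : Ω → ℝ} {c : ℝ} (hc : 0 ≤ c)
    (hf : Integrable f μ) (hpos : ∀ ω, 0 < f ω) (hh : Integrable h μ)
    (hle : ∀ ω, h ω ≤ c * log (f ω)) :
    ∫ ω, h ω ∂μ ≤ c * log (∫ ω, f ω ∂μ) := by
  set m := ∫ ω, f ω ∂μ
  have hm : 0 < m := integral_pos_of_forall_pos hf hpos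
  -- the tangent line of `log` at `m` lies above its graph
  have htangent : ∀ ω, h ω ≤ c * (log m - 1) + c / m * f ω := fun ω => by
    have := log_le_sub_one_of_pos (div_pos (hpos ω) hm)
    rw [log_div (hpos ω).ne' hm.ne'] at this
    calc h ω ≤ c * log (f ω) := hle ω
      _ ≤ c * (log m + (f ω / m - 1)) := by gcongr; linarith
      _ = c * (log m - 1) + c / m * f ω := by ring
  calc ∫ ω, h ω ∂μ ≤ ∫ ω, c * (log m - 1) + c / m * f ω ∂μ :=
        integral_mono hh ((integrable_const _).add (hf.const_mul _)) htangent
    _ = c * log m := by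
        rw [integral_add (integrable_const _) (hf.const_mul _), integral_const, integral_const_mul]
        change _ + c / m * m = _
        simp only [probReal_univ, one_smul]
        field_simp
        ring

theorem stmt7_general {Ω : Type} [MeasurableSpace Ω] (μ : Measure Ω) [IsProbabilityMeasure μ]
    (n k : ℕ) (hk : 1 ≤ k) (hkn : k ≤ n)
    (Z : Fin n → Ω → ℝ)
    (K c₁ : ℝ) (hK : 0 < K)
    (hint : ∀ i, Integrable (fun ω => Real.exp (Z i ω ^ 2 / K ^ 2)) μ)
    (hexp : ∀ i, (∫ ω, Real.exp (Z i ω ^ 2 / K ^ 2) ∂μ) ≤ c₁)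
    (hinttop : Integrable (fun ω => topkSq k (fun i => Z i ω)) μ) :
    (∫ ω, (1 / (k : ℝ)) * topkSq k (fun i => Z i ω) ∂μ) ≤
      K ^ 2 * Real.log (c₁ * n / k) := by
  have hk0 : (0 : ℝ) < k := by exact_mod_cast hk
  have hn : Nonempty (Fin n) := ⟨⟨0, by omega⟩⟩
  set G : Ω → ℝ := fun ω => (∑ i, exp (Z i ω ^ 2 / K ^ 2)) / k
  have hG : Integrable G μ := (integrable_finsetSum univ fun i _ => hint i).div_const _
  have hG_pos : ∀ ω, 0 < G ω := fun ω => by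
    have := univ_nonempty (α := Fin n)
    positivity
  have hG_le : ∫ ω, G ω ∂μ ≤ c₁ * n / k := by
    rw [integral_div, integral_finsetSum univ fun i _ => hint i]
    gcongr
    simpa [mul_comm] using sum_le_sum fun i (_ : i ∈ univ) => hexp i
  have hpointwise : ∀ ω, 1 / (k : ℝ) * topkSq k (fun i => Z i ω) ≤ K ^ 2 * log (G ω) :=
    fun ω => by
      rw [one_div_mul_eq_div, div_le_iff₀' hk0, ← mul_assoc]
      exact topkSq_le_mul_log_sum_exp hk hkn hK _
  calc ∫ ω, 1 / (k : ℝ) * topkSq k (fun i => Z i ω) ∂μ ≤ K ^ 2 * log (∫ ω, G ω ∂μ) :=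
        integral_le_mul_log_integral (by positivity) hG hG_pos (hinttop.const_mul _) hpointwise
    _ ≤ K ^ 2 * log (c₁ * n / k) := by
        gcongr
        exact integral_pos_of_forall_pos hG hG_pos

theorem stmt7 {Ω : Type} [MeasurableSpace Ω] (μ : Measure Ω) [IsProbabilityMeasure μ]
    (n k : ℕ) (hk : 1 ≤ k) (hkn : k ≤ n)
    (Z : Fin n → Ω → ℝ) (hmeas : ∀ i, Measurable (Z i))
    (K c₁ : ℝ) (hK : 0 < K) (hc₁ : 0 < c₁)
    (hint : ∀ i, Integrable (fun ω => Real.exp (Z i ω ^ 2 / K ^ 2)) μ)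
    (hexp : ∀ i, (∫ ω, Real.exp (Z i ω ^ 2 / K ^ 2) ∂μ) ≤ c₁)
    (hinttop : Integrable (fun ω => topkSq k (fun i => Z i ω)) μ) :
    (∫ ω, (1 / (k : ℝ)) * topkSq k (fun i => Z i ω) ∂μ) ≤
      K ^ 2 * Real.log (c₁ * n / k) :=
  stmt7_general μ n k hk hkn Z K c₁ hK hint hexp hinttop
end

section
/- For 1 ≤ r ≤ n and 0 < ε < 1/2, the maximal ε-separated subset of V_r = {v ∈ R^n : ‖v‖₀ ≤ r, ‖v‖₂ = 1} with respect to the Euclidean norm has cardinality at most (3en/(rε))^r. -/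
/-!
Every vector of `T` is supported on some `r`-element set of coordinates `S`. The vectors of `T`
supported on a fixed `S` form an `ε`-separated subset of the unit ball of the `r`-dimensional
Euclidean space `ℝ^S`; the disjoint balls of radius `ε / 2` around them fill at most the ball of
radius `1 + ε / 2`, so there are at most `(1 + 2 / ε) ^ r ≤ (3 / ε) ^ r` of them. Summing over the
`n.choose r ≤ (e n / r) ^ r` choices of `S` gives the bound.
-/

open Finset Real

section Packing

open MeasureTheory Metric Module

variable {E : Type*} [NormedAddCommGroup E] [NormedSpace ℝ E] [FiniteDimensional ℝ E]

theorem card_mul_pow_le_of_separated (s : Finset E) {R ε : ℝ} (hR : 0 ≤ R) (hε : 0 < ε)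
    (hs : ∀ x ∈ s, ‖x‖ ≤ R) (hsep : ∀ x ∈ s, ∀ y ∈ s, x ≠ y → ε ≤ ‖x - y‖) :
    (s.card : ℝ) * (ε / 2) ^ finrank ℝ E ≤ (R + ε / 2) ^ finrank ℝ E := by
  borelize E
  let μ : Measure E := Measure.addHaar
  have hε2 : 0 < ε / 2 := half_pos hε
  have hdisj : (s : Set E).PairwiseDisjoint fun x => ball x (ε / 2) := by
    intro x hx y hy hxy
    apply ball_disjoint_ball
    rw [dist_eq_norm, add_halves]
    exact hsep x hx y hy hxy
  have hsub : (⋃ x ∈ s, ball x (ε / 2)) ⊆ ball (0 : E) (R + ε / 2) := by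
    refine Set.iUnion₂_subset fun x hx => ball_subset_ball' ?_
    rw [dist_zero_right]
    linarith [hs x hx]
  have hvol : (s.card : ENNReal) * ENNReal.ofReal ((ε / 2) ^ finrank ℝ E) * μ (ball 0 1) ≤
      ENNReal.ofReal ((R + ε / 2) ^ finrank ℝ E) * μ (ball 0 1) :=
    calc (s.card : ENNReal) * ENNReal.ofReal ((ε / 2) ^ finrank ℝ E) * μ (ball 0 1)
        = μ (⋃ x ∈ s, ball x (ε / 2)) := by
          rw [measure_biUnion_finset hdisj fun x _ => measurableSet_ball]
          simp only [μ.addHaar_ball_of_pos _ hε2, sum_const, nsmul_eq_mul, mul_assoc]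
      _ ≤ μ (ball 0 (R + ε / 2)) := measure_mono hsub
      _ = ENNReal.ofReal ((R + ε / 2) ^ finrank ℝ E) * μ (ball 0 1) :=
          μ.addHaar_ball_of_pos _ (by linarith)
  rw [ENNReal.mul_le_mul_iff_left (measure_ball_pos _ _ one_pos).ne' measure_ball_lt_top.ne,
    ← ENNReal.ofReal_natCast, ← ENNReal.ofReal_mul (Nat.cast_nonneg _)] at hvol
  exact (ENNReal.ofReal_le_ofReal_iff (by positivity)).1 hvol

theorem card_le_pow_of_separated (s : Finset E) {R ε : ℝ} (hR : 0 ≤ R) (hε : 0 < ε)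
    (hs : ∀ x ∈ s, ‖x‖ ≤ R) (hsep : ∀ x ∈ s, ∀ y ∈ s, x ≠ y → ε ≤ ‖x - y‖) :
    (s.card : ℝ) ≤ (1 + 2 * R / ε) ^ finrank ℝ E := by
  have h := card_mul_pow_le_of_separated s hR hε hs hsep
  rwa [← le_div_iff₀ (by positivity), ← div_pow, add_div, div_self (by positivity),
    div_div_eq_mul_div, mul_comm R, add_comm] at h

end Packing

theorem Nat.choose_le_exp_mul_div_pow (n r : ℕ) :
    (n.choose r : ℝ) ≤ (exp 1 * n / r) ^ r := by
  have hrr : (r : ℝ) ^ r ≠ 0 := by rcases r with _ | r <;> positivity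
  calc (n.choose r : ℝ) ≤ (n : ℝ) ^ r / r.factorial := Nat.choose_le_pow_div r n
    _ = (n : ℝ) ^ r / r ^ r * ((r : ℝ) ^ r / r.factorial) := by field_simp
    _ ≤ (n : ℝ) ^ r / r ^ r * exp r := by
        gcongr
        exact Real.pow_div_factorial_le_exp (x := r) (Nat.cast_nonneg r) r
    _ = (exp 1 * n / r) ^ r := by rw [div_pow, mul_pow, exp_one_pow]; ring

section Sparse

variable {n : ℕ}

theorem l2norm_eq_norm_restrict {S : Finset (Fin n)} {v : Fin n → ℝ} (hv : ∀ i ∉ S, v i = 0) :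
    l2norm v = ‖(WithLp.toLp 2 fun i : S => v i : EuclideanSpace ℝ S)‖ := by
  rw [EuclideanSpace.norm_eq, l2norm]
  simp only [norm_eq_abs, sq_abs]
  rw [sum_coe_sort S fun i => v i ^ 2,
    sum_subset (subset_univ S) fun i _ hi => by rw [hv i hi, sq, mul_zero]]

theorem exists_card_eq_of_l0norm_le {v : Fin n → ℝ} {r : ℕ} (hv : l0norm v ≤ r) (hrn : r ≤ n) :
    ∃ S : Finset (Fin n), S.card = r ∧ ∀ i ∉ S, v i = 0 := by
  obtain ⟨S, hsupp, hS⟩ := exists_superset_card_eq hv (by simpa using hrn)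
  refine ⟨S, hS, fun i hi => ?_⟩
  by_contra hvi
  exact hi (hsupp (mem_filter.2 ⟨mem_univ i, hvi⟩))

theorem card_le_of_separated_of_support_subset (S : Finset (Fin n)) {ε : ℝ} (hε : 0 < ε)
    (hε1 : ε ≤ 1) (F : Finset (Fin n → ℝ)) (hsupp : ∀ v ∈ F, ∀ i ∉ S, v i = 0)
    (hF : ∀ v ∈ F, l2norm v ≤ 1) (hsep : ∀ x ∈ F, ∀ y ∈ F, x ≠ y → ε ≤ l2norm (x - y)) :
    (F.card : ℝ) ≤ (3 / ε) ^ S.card := by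
  let g : (Fin n → ℝ) → EuclideanSpace ℝ S := fun v => WithLp.toLp 2 fun i : S => v i
  have hdist : ∀ x ∈ F, ∀ y ∈ F, ‖g x - g y‖ = l2norm (x - y) := by
    intro x hx y hy
    have hsub : g x - g y = g (x - y) := rfl
    rw [hsub, l2norm_eq_norm_restrict fun i hi => ?_]
    simp [hsupp x hx i hi, hsupp y hy i hi]
  have hinj : Set.InjOn g F := by
    intro x hx y hy hxy
    by_contra hne
    have := hsep x hx y hy hne
    rw [← hdist x hx y hy, hxy, sub_self, norm_zero] at this
    linarith
  have hball : ∀ z ∈ F.image g, ‖z‖ ≤ 1 := forall_mem_image.2 fun v hv =>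
    (l2norm_eq_norm_restrict (hsupp v hv)).ge.trans (hF v hv)
  have hsep' : ∀ z ∈ F.image g, ∀ w ∈ F.image g, z ≠ w → ε ≤ ‖z - w‖ :=
    forall_mem_image.2 fun x hx => forall_mem_image.2 fun y hy hxy =>
      hdist x hx y hy ▸ hsep x hx y hy fun h => hxy (h ▸ rfl)
  have hpack := card_le_pow_of_separated (F.image g) zero_le_one hε hball hsep'
  rw [card_image_of_injOn hinj, finrank_euclideanSpace, Fintype.card_coe] at hpack
  refine hpack.trans (pow_le_pow_left₀ (by positivity) ?_ _)
  rw [mul_one, one_add_div hε.ne']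
  gcongr
  linarith

end Sparse

theorem stmt10_general (n r : ℕ) (hrn : r ≤ n) (ε : ℝ) (hε : 0 < ε) (hε2 : ε < 1/2)
    (T : Set (Fin n → ℝ)) (hT : T ⊆ sparseSphere n r)
    (hsep : ∀ x ∈ T, ∀ y ∈ T, x ≠ y → ε ≤ l2norm (x - y)) :
    (Nat.card T : ℝ) ≤ (3 * Real.exp 1 * n / (r * ε)) ^ r := by
  classical
  rcases T.finite_or_infinite with hfin | hinf
  swap
  · have := hinf.to_subtype
    rw [Nat.card_eq_zero_of_infinite, Nat.cast_zero]
    positivity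
  set F := hfin.toFinset
  let fiber (S : Finset (Fin n)) := F.filter fun v => ∀ i ∉ S, v i = 0
  have hFT : ∀ v ∈ F, v ∈ T := fun v => hfin.mem_toFinset.1
  have hcover : F ⊆ (powersetCard r univ).biUnion fiber := by
    intro v hv
    obtain ⟨S, hS, hvS⟩ := exists_card_eq_of_l0norm_le (hT (hFT v hv)).1 hrn
    exact mem_biUnion.2 ⟨S, mem_powersetCard.2 ⟨subset_univ S, hS⟩, mem_filter.2 ⟨hv, hvS⟩⟩
  have hfiber : ∀ S ∈ powersetCard r univ, ((fiber S).card : ℝ) ≤ (3 / ε) ^ r := by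
    intro S hS
    have hT' : ∀ v ∈ fiber S, v ∈ T := fun v hv => hFT v (mem_filter.1 hv).1
    rw [← (mem_powersetCard.1 hS).2]
    exact card_le_of_separated_of_support_subset S hε (by linarith) _
      (fun v hv => (mem_filter.1 hv).2) (fun v hv => (hT (hT' v hv)).2.le)
      fun x hx y hy => hsep x (hT' x hx) y (hT' y hy)
  calc (Nat.card T : ℝ) = F.card := by
        rw [Nat.card_coe_set_eq, Set.ncard_eq_toFinset_card T hfin]
    _ ≤ ∑ S ∈ powersetCard r univ, ((fiber S).card : ℝ) := by
        exact_mod_cast (card_le_card hcover).trans card_biUnion_le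
    _ ≤ (n.choose r : ℝ) * (3 / ε) ^ r := by
        simpa using sum_le_sum hfiber
    _ ≤ (exp 1 * n / r) ^ r * (3 / ε) ^ r := by
        gcongr
        exact Nat.choose_le_exp_mul_div_pow n r
    _ = (3 * exp 1 * n / (r * ε)) ^ r := by rw [← mul_pow]; ring

/-- An ε-separated subset of V_r has cardinality at most (3en/(rε))^r. -/
theorem stmt10 (n r : ℕ) (hr : 1 ≤ r) (hrn : r ≤ n) (ε : ℝ) (hε : 0 < ε) (hε2 : ε < 1/2)
    (T : Set (Fin n → ℝ)) (hT : T ⊆ sparseSphere n r)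
    (hsep : ∀ x ∈ T, ∀ y ∈ T, x ≠ y → ε ≤ l2norm (x - y)) :
    (Nat.card T : ℝ) ≤ (3 * Real.exp 1 * n / (r * ε)) ^ r :=
  stmt10_general n r hrn ε hε hε2 T hT hsep
end

section
/- Let x ∈ R^n with ‖x‖₂ ≥ a√n and ‖x‖_∞ ≤ b, and let (δ_i)_{i=1}^n be independent selectors of mean δ ∈ (0,1]. Then Pr(Σ_{i=1}^n δ_i x_i² ≤ (δ/2)‖x‖₂²) ≤ 2 exp(−c δ a² n/b²) for an absolute constant c > 0. -/
open MeasureTheory ProbabilityTheory Real Finset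

/-! Chernoff's bound at `t = -1/(2b²)`. A selector of mean `δ` gives
`E exp(t δᵢ xᵢ²) = 1 + δ (exp(-xᵢ²/(2b²)) - 1) ≤ exp(δ (exp(-xᵢ²/(2b²)) - 1))`, and since
`u = xᵢ²/(2b²) ≤ 1/2` we have `exp(-u) - 1 ≤ -u + u²/2 ≤ -3u/4`. The Chernoff exponent is then at
most `δ‖x‖²/(4b²) - 3δ‖x‖²/(8b²) = -δ‖x‖²/(8b²) ≤ -δa²n/(8b²)`, so `c = 1/8` works. -/

lemma exp_neg_le_one_sub_add_sq_div_two {u : ℝ} (hu : 0 ≤ u) :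
    exp (-u) ≤ 1 - u + u ^ 2 / 2 := by
  have hq : 0 < 1 + u + u ^ 2 / 2 := by positivity
  calc exp (-u) = (exp u)⁻¹ := exp_neg u
    _ ≤ (1 + u + u ^ 2 / 2)⁻¹ := inv_anti₀ hq (quadratic_le_exp_of_nonneg hu)
    _ ≤ 1 - u + u ^ 2 / 2 := by
      rw [inv_le_iff_one_le_mul₀' hq]
      -- the product is `1 + u ^ 4 / 4`
      nlinarith [pow_nonneg hu 4]

lemma exp_neg_le_one_sub_three_quarters_mul {u : ℝ} (hu₀ : 0 ≤ u) (hu₁ : u ≤ 1 / 2) :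
    exp (-u) ≤ 1 - 3 / 4 * u := by
  nlinarith [exp_neg_le_one_sub_add_sq_div_two hu₀]

lemma exp_neg_sq_div_sub_one_le {y b : ℝ} (hb : 0 < b) (hy : |y| ≤ b) :
    exp (-(y ^ 2 / (2 * b ^ 2))) - 1 ≤ -(3 / (8 * b ^ 2)) * y ^ 2 := by
  have hy2 : y ^ 2 ≤ b ^ 2 := sq_le_sq' (abs_le.mp hy).1 (abs_le.mp hy).2
  have hu : y ^ 2 / (2 * b ^ 2) ≤ 1 / 2 := by
    rw [div_le_iff₀ (by positivity)]; linarith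
  have h := exp_neg_le_one_sub_three_quarters_mul (by positivity) hu
  have h34 : 3 / 4 * (y ^ 2 / (2 * b ^ 2)) = 3 / (8 * b ^ 2) * y ^ 2 := by ring
  linarith

lemma exp_mul_of_eq_zero_or_eq_one {r : ℝ} (hr : r = 0 ∨ r = 1) (c : ℝ) :
    exp (r * c) = 1 + r * (exp c - 1) := by
  rcases hr with rfl | rfl <;> simp

section Selectors

variable {Ω : Type*} {m : MeasurableSpace Ω} {μ : Measure Ω} [IsProbabilityMeasure μ]

lemma integrable_exp_mul_selector {s : Ω → ℝ} (hs : Measurable s)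
    (h01 : ∀ ω, s ω = 0 ∨ s ω = 1) (c : ℝ) :
    Integrable (fun ω => exp (s ω * c)) μ := by
  refine .of_bound (by fun_prop) (max 1 (exp c)) (.of_forall fun ω => ?_)
  rcases h01 ω with h | h <;> simp [h, abs_exp]

lemma mgf_selector_mul {s : Ω → ℝ} (hs : Measurable s) (h01 : ∀ ω, s ω = 0 ∨ s ω = 1)
    (c t : ℝ) :
    mgf (fun ω => s ω * c) μ t = 1 + (∫ ω, s ω ∂μ) * (exp (t * c) - 1) := by
  have hint : Integrable s μ :=
    .of_bound hs.aestronglyMeasurable 1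
      (.of_forall fun ω => by rcases h01 ω with h | h <;> simp [h])
  have hexp : ∀ ω, exp (t * (s ω * c)) = 1 + s ω * (exp (t * c) - 1) := fun ω => by
    rw [mul_left_comm, exp_mul_of_eq_zero_or_eq_one (h01 ω)]
  simp only [mgf, hexp]
  rw [integral_add (integrable_const 1) (hint.mul_const _), integral_const, integral_mul_const]
  simp

variable {ι : Type*} [Fintype ι] {s : ι → Ω → ℝ}

lemma measureReal_sum_selector_mul_le (hs : ∀ i, Measurable (s i))
    (h01 : ∀ i ω, s i ω = 0 ∨ s i ω = 1) (hindep : iIndepFun s μ) (c : ι → ℝ) {t : ℝ}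
    (ht : t ≤ 0) (ε : ℝ) :
    μ.real {ω | ∑ i, s i ω * c i ≤ ε} ≤
      exp (-t * ε + ∑ i, (∫ ω, s i ω ∂μ) * (exp (t * c i) - 1)) := by
  set Y : ι → Ω → ℝ := fun i ω => s i ω * c i
  have hY : ∀ i, Measurable (Y i) := fun i => (hs i).mul_const _
  have hYindep : iIndepFun Y μ := hindep.comp _ fun i => measurable_id.mul_const _
  have hint : Integrable (fun ω => exp (t * (∑ i, Y i) ω)) μ :=
    hYindep.integrable_exp_mul_sum hY fun i _ => by
      simpa only [Y, mul_left_comm t, mul_comm t] using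
        integrable_exp_mul_selector (μ := μ) (hs i) (h01 i) (t * c i)
  have hmgf : mgf (∑ i, Y i) μ t ≤ exp (∑ i, (∫ ω, s i ω ∂μ) * (exp (t * c i) - 1)) := by
    rw [hYindep.mgf_sum hY, exp_sum]
    refine prod_le_prod (fun i _ => mgf_nonneg) fun i _ => ?_
    rw [mgf_selector_mul (hs i) (h01 i)]
    linarith [add_one_le_exp ((∫ ω, s i ω ∂μ) * (exp (t * c i) - 1))]
  calc μ.real {ω | ∑ i, s i ω * c i ≤ ε} = μ.real {ω | (∑ i, Y i) ω ≤ ε} := by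
        simp only [Y, Finset.sum_apply]
    _ ≤ exp (-t * ε) * mgf (∑ i, Y i) μ t := measure_le_le_exp_mul_mgf ε ht hint
    _ ≤ exp (-t * ε) * exp (∑ i, (∫ ω, s i ω ∂μ) * (exp (t * c i) - 1)) := by gcongr
    _ = _ := (exp_add _ _).symm

lemma measureReal_sum_selector_mul_sq_le (hs : ∀ i, Measurable (s i))
    (h01 : ∀ i ω, s i ω = 0 ∨ s i ω = 1) (hindep : iIndepFun s μ) {δ : ℝ} (hδ : 0 ≤ δ)
    (hmean : ∀ i, ∫ ω, s i ω ∂μ = δ) {x : ι → ℝ} {b : ℝ} (hb : 0 < b) (hx : ∀ i, |x i| ≤ b) :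
    μ.real {ω | ∑ i, s i ω * x i ^ 2 ≤ δ / 2 * ∑ i, x i ^ 2} ≤
      exp (-(δ * (∑ i, x i ^ 2) / (8 * b ^ 2))) := by
  set t : ℝ := -(1 / (2 * b ^ 2))
  have hterm : ∀ i, exp (t * x i ^ 2) - 1 ≤ -(3 / (8 * b ^ 2)) * x i ^ 2 := fun i => by
    rw [show t * x i ^ 2 = -(x i ^ 2 / (2 * b ^ 2)) by ring]
    exact exp_neg_sq_div_sub_one_le hb (hx i)
  refine (measureReal_sum_selector_mul_le hs h01 hindep (fun i => x i ^ 2) (t := t)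
    (neg_nonpos.mpr (by positivity)) _).trans (exp_le_exp.mpr ?_)
  simp only [hmean]
  calc -t * (δ / 2 * ∑ i, x i ^ 2) + ∑ i, δ * (exp (t * x i ^ 2) - 1)
      ≤ -t * (δ / 2 * ∑ i, x i ^ 2) + ∑ i, δ * (-(3 / (8 * b ^ 2)) * x i ^ 2) := by
        gcongr with i; exact hterm i
    _ = -(δ * (∑ i, x i ^ 2) / (8 * b ^ 2)) := by
        rw [← mul_sum, ← mul_sum]; simp only [t]; field_simp; ring

end Selectors

/-- Bernstein-type lower bound for the selected part of a spread-out vector. -/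
theorem stmt16 :
    ∃ c > (0 : ℝ),
      ∀ (n : ℕ), 0 < n →
      ∀ (Ω : Type) (_ : MeasurableSpace Ω) (μ : Measure Ω) (_ : IsProbabilityMeasure μ)
        (δsel : Fin n → Ω → ℝ),
        (∀ i, Measurable (δsel i)) →
        (∀ i ω, δsel i ω = 0 ∨ δsel i ω = 1) →
        iIndepFun δsel μ →
      ∀ (δ : ℝ), 0 < δ → δ ≤ 1 → (∀ i, (∫ ω, δsel i ω ∂μ) = δ) →
      ∀ (x : Fin n → ℝ) (a b : ℝ), 0 < a → 0 < b →
        a * Real.sqrt n ≤ l2norm x → (∀ i, |x i| ≤ b) →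
        μ {ω | (∑ i, δsel i ω * x i ^ 2) ≤ δ / 2 * l2norm x ^ 2} ≤
          ENNReal.ofReal (2 * Real.exp (-(c * δ * a ^ 2 * n / b ^ 2))) := by
  refine ⟨1 / 8, by norm_num, ?_⟩
  intro n _ Ω _ μ _ δsel hmeas h01 hindep δ hδ _ hmean x a b ha hb hnorm hx
  have hl2 : l2norm x ^ 2 = ∑ i, x i ^ 2 := sq_sqrt (sum_nonneg fun i _ => sq_nonneg _)
  have hT : a ^ 2 * n ≤ ∑ i, x i ^ 2 := by
    have h := (le_sqrt (by positivity) (sum_nonneg fun i _ => sq_nonneg _)).mp hnorm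
    rwa [mul_pow, sq_sqrt n.cast_nonneg] at h
  rw [hl2, ← ofReal_measureReal]
  refine ENNReal.ofReal_le_ofReal ?_
  calc μ.real {ω | ∑ i, δsel i ω * x i ^ 2 ≤ δ / 2 * ∑ i, x i ^ 2}
      ≤ exp (-(δ * (∑ i, x i ^ 2) / (8 * b ^ 2))) :=
        measureReal_sum_selector_mul_sq_le hmeas h01 hindep hδ.le hmean hb hx
    _ ≤ exp (-(1 / 8 * δ * a ^ 2 * n / b ^ 2)) := by
        rw [exp_le_exp, show 1 / 8 * δ * a ^ 2 * n / b ^ 2 = δ * (a ^ 2 * n) / (8 * b ^ 2) by ring]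
        gcongr
    _ ≤ 2 * exp (-(1 / 8 * δ * a ^ 2 * n / b ^ 2)) :=
        le_mul_of_one_le_left (exp_pos _).le one_le_two
end
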